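/- Assume the process of return vectors {X_n} in ℝ_{>0}^m is block-wise i.i.d. with block length k ≥ 2: the blocks (X_{kt+1},...,X_{kt+k}), t ≥ 0, are i.i.d. copies of (X_1,...,X_k). Let (b^{1*},...,b^{k*}) be k-log-optimal portfolios and (b_n^{k*}) the associated k-cyclic constant strategy. Then, assuming all relevant expectations are well defined and finite, almost surely lim_{t→∞} W_{kt+k}(b_{kt+k}^{k*}) = max over (b^1,...,b^k) ∈ B^{m×k} of (1/k) E[Σ_{i=1}^k log⟨b^i, X_i⟩]. -/

import Mathlib

open MeasureTheory Filter

noncomputable section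

/-- Scalar product of a portfolio with a return vector. -/
def dot {m : ℕ} (b x : Fin m → ℝ) : ℝ := ∑ j, b j * x j

/-- The portfolio simplex `B^m`. -/
def simplex (m : ℕ) : Set (Fin m → ℝ) := stdSimplex ℝ (Fin m)

/-- Growth rate `W_n(b_n) = (1/n) log S_n(b_n)` after `n` periods of a (possibly random)
strategy `b` in a market with (random) return vectors `X_1, X_2, ...`. -/
def growthRate {m : ℕ} {Ω : Type*} (X : ℕ → Ω → Fin m → ℝ) (b : ℕ → Ω → Fin m → ℝ)
    (n : ℕ) (ω : Ω) : ℝ :=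
  (n : ℝ)⁻¹ * Real.log (∏ i ∈ Finset.Icc 1 n, dot (b i ω) (X i ω))

/-- Growth rate after `n` periods of the `k`-cyclic constant strategy given by the tuple of
portfolios `B 0, ..., B (k-1)` (the portfolio `b^i` of the paper is `B (i-1)`): at each time
`n = k*t + i` with `1 ≤ i ≤ k` it invests the portfolio `B (i-1) = B ((n-1) % k)`. -/
def cyclicGrowthRate {m : ℕ} {Ω : Type*} (X : ℕ → Ω → Fin m → ℝ) (k : ℕ)
    (B : ℕ → Fin m → ℝ) (n : ℕ) (ω : Ω) : ℝ :=
  (n : ℝ)⁻¹ * Real.log (∏ i ∈ Finset.Icc 1 n, dot (B ((i - 1) % k)) (X i ω))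

lemma dot_pos {m : ℕ} {b x : Fin m → ℝ} (hb : b ∈ simplex m) (hx : ∀ j, 0 < x j) :
    0 < dot b x := by
  obtain ⟨hb0, hb1⟩ := hb
  have hne : ∃ j ∈ Finset.univ, b j ≠ 0 := by
    by_contra h
    push_neg at h
    simp only [Finset.mem_univ, forall_const] at h
    rw [Finset.sum_eq_zero (fun j _ => h j)] at hb1
    norm_num at hb1
  obtain ⟨j0, _, hj0⟩ := hne
  refine Finset.sum_pos' (fun j _ => mul_nonneg (hb0 j) (hx j).le)
    ⟨j0, Finset.mem_univ _, mul_pos (lt_of_le_of_ne (hb0 j0) (Ne.symm hj0)) (hx j0)⟩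

lemma dot_continuous {m : ℕ} (b : Fin m → ℝ) : Continuous (fun x : Fin m → ℝ => dot b x) := by
  unfold dot
  exact continuous_finset_sum _ (fun j _ => (continuous_const.mul (continuous_apply j)))

lemma sum_range_mul_block (h : ℕ → ℝ) (k T : ℕ) :
    ∑ i ∈ Finset.range (k * T), h i
      = ∑ s ∈ Finset.range T, ∑ r ∈ Finset.range k, h (k * s + r) := by
  induction T with
  | zero => simp
  | succ T ih =>
    rw [Finset.sum_range_succ, ← ih, Nat.mul_succ, Finset.sum_range_add]

lemma sum_Icc_one (g : ℕ → ℝ) (n : ℕ) :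
    ∑ i ∈ Finset.Icc 1 n, g i = ∑ i ∈ Finset.range n, g (i + 1) := by
  rw [← Finset.Ico_add_one_right_eq_Icc, Finset.sum_Ico_eq_sum_range]
  simp [add_comm]

/-- Theorem 2, value of the optimal rate. In a block-wise i.i.d. market of
block length `k ≥ 2`, the growth rate of the `k`-cyclic constant strategy given by
`k`-log-optimal portfolios converges almost surely to
`max_{(b^1,...,b^k) ∈ B^{m×k}} (1/k) E[∑ i, log ⟨b^i, X_i⟩]`. -/
theorem generalized_kelly_optimal_rate
    (m : ℕ) (hm : 2 ≤ m) (k : ℕ) (hk : 2 ≤ k)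
    {Ω : Type*} [MeasurableSpace Ω] (P : Measure Ω) [IsProbabilityMeasure P]
    (X : ℕ → Ω → Fin m → ℝ) (hpos : ∀ n ω j, 0 < X n ω j)
    (hXmeas : ∀ n, Measurable (X n))
    (hindep : ProbabilityTheory.iIndepFun
      (fun t : ℕ => fun ω => fun i : Fin k => X (k * t + (i : ℕ) + 1) ω) P)
    (hident : ∀ t : ℕ, ProbabilityTheory.IdentDistrib
      (fun ω => fun i : Fin k => X (k * t + (i : ℕ) + 1) ω)
      (fun ω => fun i : Fin k => X ((i : ℕ) + 1) ω) P P)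
    (hint : ∀ B : ℕ → Fin m → ℝ, (∀ r < k, B r ∈ simplex m) →
      Integrable (fun ω => ∑ i ∈ Finset.range k, Real.log (dot (B i) (X (i + 1) ω))) P)
    (Bstar : ℕ → Fin m → ℝ) (hBstar : ∀ r < k, Bstar r ∈ simplex m)
    (hopt : ∀ B : ℕ → Fin m → ℝ, (∀ r < k, B r ∈ simplex m) →
      (∫ ω, ∑ i ∈ Finset.range k, Real.log (dot (B i) (X (i + 1) ω)) ∂P) ≤
        ∫ ω, ∑ i ∈ Finset.range k, Real.log (dot (Bstar i) (X (i + 1) ω)) ∂P) :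
    ∀ᵐ ω ∂P, Filter.Tendsto (fun t : ℕ => cyclicGrowthRate X k Bstar (k * t + k) ω)
      Filter.atTop
      (nhds (sSup {w : ℝ | ∃ B : ℕ → Fin m → ℝ, (∀ r < k, B r ∈ simplex m) ∧
        w = (k : ℝ)⁻¹ *
          ∫ ω', ∑ i ∈ Finset.range k, Real.log (dot (B i) (X (i + 1) ω')) ∂P})) := by
  have hk0 : 0 < k := by omega
  set μ0 : ℝ := ∫ ω, ∑ i ∈ Finset.range k, Real.log (dot (Bstar i) (X (i + 1) ω)) ∂P with hμ0
  -- Compute the sSup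
  have hSup : sSup {w : ℝ | ∃ B : ℕ → Fin m → ℝ, (∀ r < k, B r ∈ simplex m) ∧
      w = (k : ℝ)⁻¹ *
        ∫ ω', ∑ i ∈ Finset.range k, Real.log (dot (B i) (X (i + 1) ω')) ∂P}
      = (k : ℝ)⁻¹ * μ0 := by
    apply IsGreatest.csSup_eq
    constructor
    · exact ⟨Bstar, hBstar, rfl⟩
    · rintro w ⟨B, hB, rfl⟩
      exact mul_le_mul_of_nonneg_left (hopt B hB) (by positivity)
  rw [hSup]
  -- the i.i.d. sequence of block log-returns
  set Y : ℕ → Ω → ℝ := fun t ω =>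
    ∑ i ∈ Finset.range k, Real.log (dot (Bstar i) (X (k * t + i + 1) ω)) with hY
  set f : (Fin k → Fin m → ℝ) → ℝ :=
    fun v => ∑ i : Fin k, Real.log (dot (Bstar (i : ℕ)) (v i)) with hfdef
  have hf : Measurable f := by
    apply Finset.measurable_sum
    intro i _
    exact Real.measurable_log.comp
      ((dot_continuous (Bstar (i : ℕ))).measurable.comp (measurable_pi_apply i))
  have hYf : ∀ t, Y t = f ∘ (fun ω => fun i : Fin k => X (k * t + (i : ℕ) + 1) ω) := by
    intro t
    funext ω
    simp only [hY, hfdef, Function.comp_apply]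
    rw [Finset.sum_range fun i => Real.log (dot (Bstar i) (X (k * t + i + 1) ω))]
  have hY0eq : Y 0 = fun ω => ∑ i ∈ Finset.range k, Real.log (dot (Bstar i) (X (i + 1) ω)) := by
    funext ω
    simp [hY]
  have hintY : Integrable (Y 0) P := by rw [hY0eq]; exact hint Bstar hBstar
  have hEY : ∫ ω, Y 0 ω ∂P = μ0 := by rw [hY0eq, hμ0]
  have hYindep : Pairwise (Function.onFun (ProbabilityTheory.IndepFun · · P) Y) := by
    intro i j hij
    have h := (hindep.comp (fun _ => f) (fun _ => hf)).indepFun hij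
    simpa only [Function.onFun, ← hYf] using h
  have hYident : ∀ t, ProbabilityTheory.IdentDistrib (Y t) (Y 0) P P := by
    intro t
    have h := ((hident t).trans (hident 0).symm).comp hf
    rw [hYf t, hYf 0]
    exact h
  have hSLLN := ProbabilityTheory.strong_law_ae_real Y hintY hYindep hYident
  filter_upwards [hSLLN] with ω hω
  rw [hEY] at hω
  have h1 : Tendsto (fun t : ℕ => (∑ i ∈ Finset.range (t + 1), Y i ω) / ((t : ℝ) + 1))
      atTop (nhds μ0) := by
    have := hω.comp (tendsto_add_atTop_nat 1)
    refine this.congr fun t => ?_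
    simp [Function.comp]
  have h2 := h1.const_mul ((k : ℝ)⁻¹)
  refine h2.congr fun t => ?_
  -- now show the identity for each t
  have hlog : Real.log (∏ i ∈ Finset.Icc 1 (k * t + k), dot (Bstar ((i - 1) % k)) (X i ω))
      = ∑ i ∈ Finset.Icc 1 (k * t + k), Real.log (dot (Bstar ((i - 1) % k)) (X i ω)) := by
    apply Real.log_prod
    intro i _
    exact (dot_pos (hBstar _ (Nat.mod_lt _ hk0)) (fun j => hpos i ω j)).ne'
  have hre : ∑ i ∈ Finset.Icc 1 (k * t + k), Real.log (dot (Bstar ((i - 1) % k)) (X i ω))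
      = ∑ s ∈ Finset.range (t + 1), Y s ω := by
    rw [sum_Icc_one]
    have hmul : k * t + k = k * (t + 1) := by ring
    rw [hmul, sum_range_mul_block]
    apply Finset.sum_congr rfl
    intro s _
    apply Finset.sum_congr rfl
    intro r hr
    have hr' : r < k := Finset.mem_range.mp hr
    congr 2
    · simp [Nat.mul_add_mod, Nat.mod_eq_of_lt hr']
  have hcast : ((k * t + k : ℕ) : ℝ)⁻¹ = (k : ℝ)⁻¹ * ((t : ℝ) + 1)⁻¹ := by
    have : ((k * t + k : ℕ) : ℝ) = (k : ℝ) * ((t : ℝ) + 1) := by push_cast; ring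
    rw [this, mul_inv]
  simp only [cyclicGrowthRate, hlog, hre, hcast]
  rw [div_eq_mul_inv]
  ring
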